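/- Let Λ be a discrete index set and ω a K-admissible index distance on Λ with constants C_S and C_ω. If A ∈ ℂ^{Λ×Λ} is N-localized with respect to ω for some N ≥ K, then the matrix operator (Aa)_λ := Σ_{λ'} A_{λ,λ'} a_{λ'} is bounded from ℓ^p(Λ) to ℓ^p(Λ) for all p ∈ [1,∞], with operator norm at most C_S^{N/p} C_ω ‖A‖_{𝓑_N}. -/

import Mathlib

/-! The entries of `A` are dominated both by `CA ω(λ,λ')^{-K}` and, through
`ω(λ',λ) ≤ C_S ω(λ,λ')`, by `C_S^N CA ω(λ',λ)^{-K}`. Admissibility therefore bounds the row sums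
of `|A|` by `R = CA C_ω` and its column sums by `C_S^N R`. The Schur test (weighted Hölder in each
row, then exchanging the two sums) gives `‖A‖_{p→p} ≤ R^{1-1/p} (C_S^N R)^{1/p} = C_S^{N/p} C_ω CA`;
for `p = ∞` the row-sum bound alone suffices. The Schur test is run in `ℝ≥0∞`, where sums can be
exchanged and compared before anything is known to be summable. -/

open scoped ENNReal

namespace ENNReal

variable {ι κ : Type*}

theorem inner_le_weight_mul_Lp_tsum {p : ℝ} (hp : 1 ≤ p) (w f : ι → ℝ≥0∞) :
    ∑' i, w i * f i ≤ (∑' i, w i) ^ (1 - p⁻¹) * (∑' i, w i * f i ^ p) ^ p⁻¹ := by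
  have hp₁ : 0 ≤ 1 - p⁻¹ := sub_nonneg.2 (inv_le_one_of_one_le₀ hp)
  refine ENNReal.summable.tsum_le_of_sum_le fun s => ?_
  calc ∑ i ∈ s, w i * f i
      ≤ (∑ i ∈ s, w i) ^ (1 - p⁻¹) * (∑ i ∈ s, w i * f i ^ p) ^ p⁻¹ :=
        inner_le_weight_mul_Lp_of_nonneg s hp w f
    _ ≤ (∑' i, w i) ^ (1 - p⁻¹) * (∑' i, w i * f i ^ p) ^ p⁻¹ := by
        gcongr <;> exact ENNReal.sum_le_tsum s

theorem rpow_tsum_mul_le {p : ℝ} (hp : 1 ≤ p) (w f : ι → ℝ≥0∞) :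
    (∑' i, w i * f i) ^ p ≤ (∑' i, w i) ^ (p - 1) * ∑' i, w i * f i ^ p := by
  have hp₀ : 0 < p := zero_lt_one.trans_le hp
  calc (∑' i, w i * f i) ^ p
      ≤ ((∑' i, w i) ^ (1 - p⁻¹) * (∑' i, w i * f i ^ p) ^ p⁻¹) ^ p := by
        gcongr; exact inner_le_weight_mul_Lp_tsum hp w f
    _ = (∑' i, w i) ^ (p - 1) * ∑' i, w i * f i ^ p := by
        rw [mul_rpow_of_nonneg _ _ hp₀.le, ← rpow_mul, ← rpow_mul, inv_mul_cancel₀ hp₀.ne',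
          rpow_one, sub_mul, one_mul, inv_mul_cancel₀ hp₀.ne']

theorem schur_test {p : ℝ} (hp : 1 ≤ p) (k : ι → κ → ℝ≥0∞) (f : κ → ℝ≥0∞) {R C : ℝ≥0∞}
    (hR : ∀ i, ∑' j, k i j ≤ R) (hC : ∀ j, ∑' i, k i j ≤ C) :
    ∑' i, (∑' j, k i j * f j) ^ p ≤ R ^ (p - 1) * C * ∑' j, f j ^ p :=
  calc ∑' i, (∑' j, k i j * f j) ^ p
      ≤ ∑' i, R ^ (p - 1) * ∑' j, k i j * f j ^ p := by
        gcongr with i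
        exact (rpow_tsum_mul_le hp _ _).trans (by gcongr; exact hR i)
    _ = R ^ (p - 1) * ∑' j, (∑' i, k i j) * f j ^ p := by
        rw [ENNReal.tsum_mul_left, ENNReal.tsum_comm]
        simp only [ENNReal.tsum_mul_right]
    _ ≤ R ^ (p - 1) * ∑' j, C * f j ^ p := by
        gcongr with j
        exact hC j
    _ = R ^ (p - 1) * C * ∑' j, f j ^ p := by rw [ENNReal.tsum_mul_left, mul_assoc]

end ENNReal

section NormBounds

variable {ι : Type*} {E : Type*} [SeminormedAddCommGroup E]

theorem summable_and_tsum_norm_le_of_norm_le {g : ι → E} {u : ι → ℝ} {c U : ℝ} (hc : 0 ≤ c)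
    (hu : Summable u) (hU : ∑' i, u i ≤ U) (h : ∀ i, ‖g i‖ ≤ c * u i) :
    Summable (fun i => ‖g i‖) ∧ ∑' i, ‖g i‖ ≤ c * U := by
  have hsum : Summable (fun i => ‖g i‖) :=
    (hu.mul_left c).of_nonneg_of_le (fun _ => norm_nonneg _) h
  refine ⟨hsum, ?_⟩
  calc ∑' i, ‖g i‖ ≤ ∑' i, c * u i := hsum.tsum_le_tsum h (hu.mul_left c)
    _ = c * ∑' i, u i := tsum_mul_left
    _ ≤ c * U := by gcongr

theorem tsum_enorm_le_ofReal_of_norm_le {g : ι → E} {u : ι → ℝ} {c U : ℝ} (hc : 0 ≤ c)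
    (hu : Summable u) (hU : ∑' i, u i ≤ U) (h : ∀ i, ‖g i‖ ≤ c * u i) :
    ∑' i, ‖g i‖ₑ ≤ ENNReal.ofReal (c * U) := by
  obtain ⟨hsum, hle⟩ := summable_and_tsum_norm_le_of_norm_le hc hu hU h
  simp_rw [← ofReal_norm]
  rw [← ENNReal.ofReal_tsum_of_nonneg (fun _ => norm_nonneg _) hsum]
  exact ENNReal.ofReal_le_ofReal hle

variable {p : ℝ} {x : ι → E}

theorem ofReal_tsum_norm_rpow (hp : 0 ≤ p) (hx : Summable fun i => ‖x i‖ ^ p) :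
    ENNReal.ofReal (∑' i, ‖x i‖ ^ p) = ∑' i, ‖x i‖ₑ ^ p := by
  rw [ENNReal.ofReal_tsum_of_nonneg (fun _ => by positivity) hx]
  simp_rw [← ofReal_norm, ENNReal.ofReal_rpow_of_nonneg (norm_nonneg _) hp]

theorem summable_and_tsum_norm_rpow_le_of_tsum_enorm_rpow_le (hp : 0 ≤ p) {M : ℝ} (hM : 0 ≤ M)
    (h : ∑' i, ‖x i‖ₑ ^ p ≤ ENNReal.ofReal M) :
    (Summable fun i => ‖x i‖ ^ p) ∧ ∑' i, ‖x i‖ ^ p ≤ M := by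
  have hsum : Summable fun i => ‖x i‖ ^ p := by
    refine (ENNReal.summable_toReal (h.trans_lt ENNReal.ofReal_lt_top).ne).congr fun i => ?_
    rw [← ofReal_norm, ENNReal.ofReal_rpow_of_nonneg (norm_nonneg _) hp,
      ENNReal.toReal_ofReal (by positivity)]
  refine ⟨hsum, ?_⟩
  rwa [← ENNReal.ofReal_le_ofReal_iff hM, ofReal_tsum_norm_rpow hp hsum]

theorem norm_le_tsum_norm_rpow_rpow_inv (hp : 0 < p) (hx : Summable fun i => ‖x i‖ ^ p) (i : ι) :
    ‖x i‖ ≤ (∑' j, ‖x j‖ ^ p) ^ p⁻¹ :=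
  calc ‖x i‖ = (‖x i‖ ^ p) ^ p⁻¹ := (Real.rpow_rpow_inv (norm_nonneg _) hp.ne').symm
    _ ≤ (∑' j, ‖x j‖ ^ p) ^ p⁻¹ := by
      gcongr
      exact hx.le_tsum i fun j _ => by positivity

end NormBounds

theorem schur_test_lp {𝕜 ι κ : Type*} [NormedField 𝕜] {A : ι → κ → 𝕜} {R C p : ℝ}
    (hp : 1 ≤ p) (hR₀ : 0 ≤ R) (hC₀ : 0 ≤ C)
    (hR : ∀ i, ∑' j, ‖A i j‖ₑ ≤ ENNReal.ofReal R) (hC : ∀ j, ∑' i, ‖A i j‖ₑ ≤ ENNReal.ofReal C)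
    {a : κ → 𝕜} (ha : Summable fun j => ‖a j‖ ^ p) :
    (Summable fun i => ‖∑' j, A i j * a j‖ ^ p) ∧
      ∑' i, ‖∑' j, A i j * a j‖ ^ p ≤ R ^ (p - 1) * C * ∑' j, ‖a j‖ ^ p := by
  have hp₀ : 0 ≤ p := zero_le_one.trans hp
  refine summable_and_tsum_norm_rpow_le_of_tsum_enorm_rpow_le hp₀ (by positivity) ?_
  calc ∑' i, ‖∑' j, A i j * a j‖ₑ ^ p
      ≤ ∑' i, (∑' j, ‖A i j‖ₑ * ‖a j‖ₑ) ^ p := by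
        gcongr with i
        simpa only [enorm_mul] using enorm_tsum_le_tsum_enorm (f := fun j => A i j * a j)
    _ ≤ ENNReal.ofReal R ^ (p - 1) * ENNReal.ofReal C * ∑' j, ‖a j‖ₑ ^ p :=
        ENNReal.schur_test hp _ _ hR hC
    _ = ENNReal.ofReal (R ^ (p - 1) * C * ∑' j, ‖a j‖ ^ p) := by
        rw [← ofReal_tsum_norm_rpow hp₀ ha, ENNReal.ofReal_rpow_of_nonneg hR₀ (by linarith),
          ENNReal.ofReal_mul (by positivity), ENNReal.ofReal_mul (by positivity)]

theorem rpow_sub_one_mul_mul_rpow_inv {r s T p : ℝ} (hr : 0 ≤ r) (hs : 0 ≤ s) (hT : 0 ≤ T)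
    (hp : 0 < p) : (r ^ (p - 1) * (s * r) * T) ^ p⁻¹ = s ^ p⁻¹ * r * T ^ p⁻¹ := by
  have hrp : r ^ (p - 1) * r = r ^ p := by
    rw [← Real.rpow_add_one' hr (by linarith), sub_add_cancel]
  rw [show r ^ (p - 1) * (s * r) * T = s * r ^ p * T by rw [← hrp]; ring,
    Real.mul_rpow (by positivity) hT, Real.mul_rpow hs (by positivity),
    Real.rpow_rpow_inv hr hp.ne']

section Localized

variable {Λ : Type*} {ω : Λ → Λ → ℝ} {A : Λ → Λ → ℂ} {K N CA : ℝ}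

theorem norm_le_mul_rpow_neg_of_exponent_le (hω1 : ∀ l l', 1 ≤ ω l l') (hNK : K ≤ N)
    (hCA : 0 ≤ CA)
    (hA : ∀ l l', ‖A l l'‖ ≤ CA * ω l l' ^ (-N)) (l l' : Λ) :
    ‖A l l'‖ ≤ CA * ω l l' ^ (-K) :=
  (hA l l').trans <| by gcongr; exact hω1 l l'

theorem norm_le_mul_rpow_neg_swap {C_S : ℝ} (hω1 : ∀ l l', 1 ≤ ω l l') (hCS : 1 ≤ C_S)
    (hsym : ∀ l l', ω l l' ≤ C_S * ω l' l) (hN : 0 ≤ N) (hNK : K ≤ N) (hCA : 0 ≤ CA)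
    (hA : ∀ l l', ‖A l l'‖ ≤ CA * ω l l' ^ (-N)) (l l' : Λ) :
    ‖A l l'‖ ≤ C_S ^ N * CA * ω l' l ^ (-K) := by
  have hω₀ : ∀ l l', 0 < ω l l' := fun l l' => zero_lt_one.trans_le (hω1 l l')
  have hCS₀ : 0 < C_S := zero_lt_one.trans_le hCS
  have hswap : ω l l' ^ (-N) ≤ C_S ^ N * ω l' l ^ (-N) :=
    calc ω l l' ^ (-N) = C_S ^ N * (C_S * ω l l') ^ (-N) := by
          rw [Real.mul_rpow hCS₀.le (hω₀ l l').le, ← mul_assoc, ← Real.rpow_add hCS₀,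
            add_neg_cancel, Real.rpow_zero, one_mul]
      _ ≤ C_S ^ N * ω l' l ^ (-N) :=
          mul_le_mul_of_nonneg_left
            (Real.rpow_le_rpow_of_nonpos (hω₀ l' l) (hsym l' l) (neg_nonpos.2 hN)) (by positivity)
  calc ‖A l l'‖ ≤ CA * (C_S ^ N * ω l' l ^ (-N)) := (hA l l').trans (by gcongr)
    _ ≤ C_S ^ N * CA * ω l' l ^ (-K) := by
        rw [mul_left_comm, mul_assoc]
        gcongr
        exact hω1 l' l

theorem summable_and_norm_tsum_mul_le {C_ω : ℝ}
    (hadm : ∀ l, Summable (fun l' => ω l l' ^ (-K)) ∧ ∑' l', ω l l' ^ (-K) ≤ C_ω)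
    (hCA : 0 ≤ CA) (hAK : ∀ l l', ‖A l l'‖ ≤ CA * ω l l' ^ (-K))
    {a : Λ → ℂ} {Ca : ℝ} (ha : ∀ l, ‖a l‖ ≤ Ca) (l : Λ) :
    Summable (fun l' => A l l' * a l') ∧ ‖∑' l', A l l' * a l'‖ ≤ C_ω * CA * Ca := by
  have hCa : 0 ≤ Ca := (norm_nonneg _).trans (ha l)
  obtain ⟨hsum, hle⟩ := summable_and_tsum_norm_le_of_norm_le (g := fun l' => A l l' * a l')
    (mul_nonneg hCA hCa) (hadm l).1 (hadm l).2 fun l' => by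
      rw [norm_mul, mul_right_comm]
      exact mul_le_mul (hAK l l') (ha l') (norm_nonneg _) ((norm_nonneg _).trans (hAK l l'))
  refine ⟨hsum.of_norm, (norm_tsum_le_tsum_norm hsum).trans (hle.trans_eq (by ring))⟩

end Localized

theorem stmt_6_general {Λ : Type*} (ω : Λ → Λ → ℝ) (C_S C_ω K : ℝ)
    (hω1 : ∀ l l' : Λ, 1 ≤ ω l l')
    (hCS : 1 ≤ C_S)
    (hsym : ∀ l l' : Λ, ω l l' ≤ C_S * ω l' l)
    (hK : 1 ≤ K)
    (hadm : ∀ l : Λ, Summable (fun l' : Λ => ω l l' ^ (-K)) ∧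
      ∑' l' : Λ, ω l l' ^ (-K) ≤ C_ω)
    (N : ℝ) (hNK : K ≤ N)
    (A : Λ → Λ → ℂ) (CA : ℝ) (hCA : 0 ≤ CA)
    (hA : ∀ l l' : Λ, ‖A l l'‖ ≤ CA * ω l l' ^ (-N)) :
    -- finite `p ∈ [1,∞)`
    (∀ p : ℝ, 1 ≤ p → ∀ a : Λ → ℂ,
      Summable (fun l : Λ => ‖a l‖ ^ p) →
        (∀ l : Λ, Summable (fun l' : Λ => A l l' * a l')) ∧
        Summable (fun l : Λ => ‖∑' l' : Λ, A l l' * a l'‖ ^ p) ∧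
        (∑' l : Λ, ‖∑' l' : Λ, A l l' * a l'‖ ^ p) ^ (1 / p) ≤
          C_S ^ (N / p) * C_ω * CA *
            (∑' l : Λ, ‖a l‖ ^ p) ^ (1 / p)) ∧
    -- the case `p = ∞`
    (∀ a : Λ → ℂ, ∀ Ca : ℝ, (∀ l : Λ, ‖a l‖ ≤ Ca) →
      (∀ l : Λ, Summable (fun l' : Λ => A l l' * a l')) ∧
      ∀ l : Λ, ‖∑' l' : Λ, A l l' * a l'‖ ≤ C_ω * CA * Ca) := by
  have hN : 0 ≤ N := by linarith
  have hAK := norm_le_mul_rpow_neg_of_exponent_le hω1 hNK hCA hA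
  have hAK' := norm_le_mul_rpow_neg_swap hω1 hCS hsym hN hNK hCA hA
  refine ⟨fun p hp a ha => ?_, fun a Ca ha =>
    forall_and.1 (summable_and_norm_tsum_mul_le hadm hCA hAK ha)⟩
  have hp₀ : 0 < p := zero_lt_one.trans_le hp
  -- `0 ≤ C_ω` is only forced by admissibility at some point of `Λ`.
  rcases isEmpty_or_nonempty Λ with hΛ | ⟨⟨l₀⟩⟩
  · simp [Real.zero_rpow (inv_pos.2 hp₀).ne']
  have hCω : 0 ≤ C_ω :=
    (tsum_nonneg fun _ => Real.rpow_nonneg (zero_le_one.trans (hω1 _ _)) _).trans (hadm l₀).2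
  obtain ⟨hsum, hle⟩ := schur_test_lp hp (by positivity) (by positivity)
    (fun l => tsum_enorm_le_ofReal_of_norm_le hCA (hadm l).1 (hadm l).2 (hAK l))
    (fun l' => tsum_enorm_le_ofReal_of_norm_le (by positivity) (hadm l').1 (hadm l').2
      fun l => hAK' l l') ha
  refine ⟨fun l => (summable_and_norm_tsum_mul_le hadm hCA hAK
    (norm_le_tsum_norm_rpow_rpow_inv hp₀ ha) l).1, hsum, ?_⟩
  calc (∑' l, ‖∑' l', A l l' * a l'‖ ^ p) ^ (1 / p)
      ≤ ((CA * C_ω) ^ (p - 1) * (C_S ^ N * CA * C_ω) * ∑' l, ‖a l‖ ^ p) ^ (1 / p) := by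
        gcongr
    _ = C_S ^ (N / p) * C_ω * CA * (∑' l, ‖a l‖ ^ p) ^ (1 / p) := by
        rw [mul_assoc (C_S ^ N), one_div, rpow_sub_one_mul_mul_rpow_inv (by positivity)
          (by positivity) (tsum_nonneg fun _ => by positivity) hp₀, ← Real.rpow_mul (by positivity),
          div_eq_mul_inv]
        ring

/-- If `ω` is a `K`-admissible index distance (constants `C_S`, `C_ω`) and `A` is
`N`-localized with respect to `ω` for some `N ≥ K` (localization constant `CA`, standing
for `‖A‖_{𝓑_N}`), then `A` maps `ℓ^p(Λ)` boundedly to `ℓ^p(Λ)` for all `p ∈ [1,∞]`,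
with operator norm at most `C_S^{N/p} C_ω ‖A‖_{𝓑_N}` (for `p = ∞`, `C_S^{N/p} = 1`). -/
theorem stmt_6 {Λ : Type*} (ω : Λ → Λ → ℝ) (C_S C_T C_ω K : ℝ)
    (hω1 : ∀ l l' : Λ, 1 ≤ ω l l')
    (hdiag : ∀ l : Λ, ω l l = 1)
    (hCS : 1 ≤ C_S) (hCT : 1 ≤ C_T)
    (hsym : ∀ l l' : Λ, ω l l' ≤ C_S * ω l' l)
    (htri : ∀ l l' l'' : Λ, ω l l' ≤ C_T * ω l l'' * ω l'' l')
    (hK : 1 ≤ K)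
    (hadm : ∀ l : Λ, Summable (fun l' : Λ => ω l l' ^ (-K)) ∧
      ∑' l' : Λ, ω l l' ^ (-K) ≤ C_ω)
    (N : ℝ) (hNK : K ≤ N)
    (A : Λ → Λ → ℂ) (CA : ℝ) (hCA : 0 ≤ CA)
    (hA : ∀ l l' : Λ, ‖A l l'‖ ≤ CA * ω l l' ^ (-N)) :
    -- finite `p ∈ [1,∞)`
    (∀ p : ℝ, 1 ≤ p → ∀ a : Λ → ℂ,
      Summable (fun l : Λ => ‖a l‖ ^ p) →
        (∀ l : Λ, Summable (fun l' : Λ => A l l' * a l')) ∧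
        Summable (fun l : Λ => ‖∑' l' : Λ, A l l' * a l'‖ ^ p) ∧
        (∑' l : Λ, ‖∑' l' : Λ, A l l' * a l'‖ ^ p) ^ (1 / p) ≤
          C_S ^ (N / p) * C_ω * CA *
            (∑' l : Λ, ‖a l‖ ^ p) ^ (1 / p)) ∧
    -- the case `p = ∞`
    (∀ a : Λ → ℂ, ∀ Ca : ℝ, (∀ l : Λ, ‖a l‖ ≤ Ca) →
      (∀ l : Λ, Summable (fun l' : Λ => A l l' * a l')) ∧
      ∀ l : Λ, ‖∑' l' : Λ, A l l' * a l'‖ ≤ C_ω * CA * Ca) :=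
  stmt_6_general ω C_S C_ω K hω1 hCS hsym hK hadm N hNK A CA hCA hA
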